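/- Let (A,·,1) be a unital associative algebra and r ∈ A⊗A such that its μ-extended symmetrizer 𝐫 := r + σ(r) − μ(1⊗1) is invariant. Then r is a solution of r₁₂r₁₃ + r₁₃r₂₃ − r₂₃r₁₂ = μ r₁₃ if and only if r is a solution of r₁₃r₁₂ + r₂₃r₁₃ − r₁₂r₂₃ = μ r₁₃. -/

import Mathlib

open TensorProduct

noncomputable def t12 (k A : Type*) [Field k] [Ring A] [Algebra k A]
    (r : A ⊗[k] A) : A ⊗[k] (A ⊗[k] A) :=
  LinearMap.lTensor A ((TensorProduct.mk k A A).flip 1) r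

noncomputable def t13 (k A : Type*) [Field k] [Ring A] [Algebra k A]
    (r : A ⊗[k] A) : A ⊗[k] (A ⊗[k] A) :=
  LinearMap.lTensor A (TensorProduct.mk k A A 1) r

noncomputable def t23 (k A : Type*) [Field k] [Ring A] [Algebra k A]
    (r : A ⊗[k] A) : A ⊗[k] (A ⊗[k] A) :=
  (1 : A) ⊗ₜ[k] r

/-- The μ-nonhomogeneous associative Yang-Baxter equation
`r₁₂r₁₃ + r₁₃r₂₃ − r₂₃r₁₂ = μ r₁₃` in `A ⊗ A ⊗ A`. -/
noncomputable def nhacYBE (k A : Type*) [Field k] [Ring A] [Algebra k A]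
    (μ : k) (r : A ⊗[k] A) : Prop :=
  t12 k A r * t13 k A r + t13 k A r * t23 k A r - t23 k A r * t12 k A r
    = μ • t13 k A r

/-- A tensor `s ∈ A ⊗ A` is invariant if `(id ⊗ L(x) − R(x) ⊗ id) s = 0` for all `x`. -/
def tinv (k A : Type*) [Field k] [Ring A] [Algebra k A]
    (s : A ⊗[k] A) : Prop :=
  ∀ x : A,
    LinearMap.lTensor A (LinearMap.mulLeft k x) s
      - LinearMap.rTensor A (LinearMap.mulRight k x) s = 0

/-- `r♯ : A* → A`, `⟨r♯(a*), b*⟩ = ⟨r, a* ⊗ b*⟩`. -/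
noncomputable def rsharp (k A : Type*) [Field k] [Ring A] [Algebra k A]
    (r : A ⊗[k] A) (f : Module.Dual k A) : A :=
  TensorProduct.lid k A (LinearMap.rTensor A f r)

/-- `r^{t♯} : A* → A`, `⟨r^{t♯}(a*), b*⟩ = ⟨r, b* ⊗ a*⟩`. -/
noncomputable def rtsharp (k A : Type*) [Field k] [Ring A] [Algebra k A]
    (r : A ⊗[k] A) (f : Module.Dual k A) : A :=
  TensorProduct.rid k A (LinearMap.lTensor A f r)

/-- `L*(x) : A* → A*`, `⟨a* L*(x), b⟩ = ⟨a*, x b⟩`. -/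
noncomputable def Lstar (k A : Type*) [Field k] [Ring A] [Algebra k A]
    (x : A) : Module.Dual k A →ₗ[k] Module.Dual k A :=
  (LinearMap.mulLeft k x).dualMap

/-- `R*(x) : A* → A*`, `⟨R*(x) a*, b⟩ = ⟨a*, b x⟩`. -/
noncomputable def Rstar (k A : Type*) [Field k] [Ring A] [Algebra k A]
    (x : A) : Module.Dual k A →ₗ[k] Module.Dual k A :=
  (LinearMap.mulRight k x).dualMap

/-! Write `g := r + σ(r) − μ(1⊗1)`. Invariance of `g` gives the commutation rules
`g₁₂ v₁₃ = v₂₃ g₁₂` and `v₁₃ g₂₃ = g₂₃ v₁₂` for every `v`, and, since `g` is also `σ`-symmetric,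
`g₁₃ v₂₃ = σ(v)₁₂ g₁₃`. Substituting `σ(r) = g − r + μ(1⊗1)` and using these rules shows that
`r₁₂r₁₃ + r₁₃r₂₃ − r₂₃r₁₂ − μ r₁₃` takes the same value at `σ(r)` as at `r`. The algebra
automorphism `x ⊗ y ⊗ z ↦ z ⊗ y ⊗ x` sends `u₁₂, u₁₃, u₂₃` to `σ(u)₂₃, σ(u)₁₃, σ(u)₁₂`, so it turns
this expression at `σ(r)` into `r₂₃r₁₃ + r₁₃r₁₂ − r₁₂r₂₃ − μ r₁₃`. -/

section Invariant

variable {k A : Type*} [Field k] [Ring A] [Algebra k A] {g : A ⊗[k] A}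

lemma tinv.lTensor_mulLeft (hg : tinv k A g) (x : A) :
    LinearMap.lTensor A (LinearMap.mulLeft k x) g
      = LinearMap.rTensor A (LinearMap.mulRight k x) g :=
  sub_eq_zero.mp (hg x)

lemma tinv.lTensor_mulRight_of_comm (hg : tinv k A g) (hsymm : TensorProduct.comm k A A g = g)
    (x : A) :
    LinearMap.lTensor A (LinearMap.mulRight k x) g
      = LinearMap.rTensor A (LinearMap.mulLeft k x) g := by
  have h := congrArg (TensorProduct.comm k A A) (hg.lTensor_mulLeft x)
  rwa [← LinearMap.rTensor_comm, ← LinearMap.lTensor_comm, hsymm, eq_comm] at h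

end Invariant

section Legs

variable {k A : Type*} [Field k] [Ring A] [Algebra k A]

@[simp] lemma t12_tmul (a b : A) : t12 k A (a ⊗ₜ[k] b) = a ⊗ₜ[k] (b ⊗ₜ[k] (1 : A)) := rfl

@[simp] lemma t13_tmul (a b : A) : t13 k A (a ⊗ₜ[k] b) = a ⊗ₜ[k] ((1 : A) ⊗ₜ[k] b) := rfl

@[simp] lemma t23_tmul (a b : A) : t23 k A (a ⊗ₜ[k] b) = (1 : A) ⊗ₜ[k] (a ⊗ₜ[k] b) := rfl

@[simp] lemma t12_add (x y : A ⊗[k] A) : t12 k A (x + y) = t12 k A x + t12 k A y :=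
  map_add _ x y

@[simp] lemma t13_add (x y : A ⊗[k] A) : t13 k A (x + y) = t13 k A x + t13 k A y :=
  map_add _ x y

@[simp] lemma t23_add (x y : A ⊗[k] A) : t23 k A (x + y) = t23 k A x + t23 k A y :=
  tmul_add _ x y

lemma t12_mul_t13_tmul (t : A ⊗[k] A) (a b : A) :
    t12 k A t * t13 k A (a ⊗ₜ[k] b) = LinearMap.lTensor A ((TensorProduct.mk k A A).flip b)
      (LinearMap.rTensor A (LinearMap.mulRight k a) t) := by
  induction t using TensorProduct.induction_on with
  | zero => simp [t12]
  | tmul c d => simp [Algebra.TensorProduct.tmul_mul_tmul]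
  | add x y hx hy => simp_all [add_mul]

lemma t23_tmul_mul_t12 (t : A ⊗[k] A) (a b : A) :
    t23 k A (a ⊗ₜ[k] b) * t12 k A t = LinearMap.lTensor A ((TensorProduct.mk k A A).flip b)
      (LinearMap.lTensor A (LinearMap.mulLeft k a) t) := by
  induction t using TensorProduct.induction_on with
  | zero => simp [t12]
  | tmul c d => simp [Algebra.TensorProduct.tmul_mul_tmul]
  | add x y hx hy => simp_all [mul_add]

lemma t13_tmul_mul_t23 (t : A ⊗[k] A) (a b : A) :
    t13 k A (a ⊗ₜ[k] b) * t23 k A t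
      = a ⊗ₜ[k] LinearMap.lTensor A (LinearMap.mulLeft k b) t := by
  induction t using TensorProduct.induction_on with
  | zero => simp [t23]
  | tmul c d => simp [Algebra.TensorProduct.tmul_mul_tmul]
  | add x y hx hy => simp_all [mul_add, tmul_add]

lemma t23_mul_t12_tmul (t : A ⊗[k] A) (a b : A) :
    t23 k A t * t12 k A (a ⊗ₜ[k] b)
      = a ⊗ₜ[k] LinearMap.rTensor A (LinearMap.mulRight k b) t := by
  induction t using TensorProduct.induction_on with
  | zero => simp [t23]
  | tmul c d => simp [Algebra.TensorProduct.tmul_mul_tmul]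
  | add x y hx hy => simp_all [add_mul, tmul_add]

lemma t13_mul_t23_tmul (t : A ⊗[k] A) (a b : A) :
    t13 k A t * t23 k A (a ⊗ₜ[k] b) = LinearMap.lTensor A (TensorProduct.mk k A A a)
      (LinearMap.lTensor A (LinearMap.mulRight k b) t) := by
  induction t using TensorProduct.induction_on with
  | zero => simp [t13]
  | tmul c d => simp [Algebra.TensorProduct.tmul_mul_tmul]
  | add x y hx hy => simp_all [add_mul]

lemma t12_tmul_mul_t13 (t : A ⊗[k] A) (a b : A) :
    t12 k A (a ⊗ₜ[k] b) * t13 k A t = LinearMap.lTensor A (TensorProduct.mk k A A b)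
      (LinearMap.rTensor A (LinearMap.mulLeft k a) t) := by
  induction t using TensorProduct.induction_on with
  | zero => simp [t13]
  | tmul c d => simp [Algebra.TensorProduct.tmul_mul_tmul]
  | add x y hx hy => simp_all [mul_add]

variable {g : A ⊗[k] A}

lemma tinv.t12_mul_t13 (hg : tinv k A g) (v : A ⊗[k] A) :
    t12 k A g * t13 k A v = t23 k A v * t12 k A g := by
  induction v using TensorProduct.induction_on with
  | zero => simp [t13, t23]
  | tmul a b => rw [t12_mul_t13_tmul, t23_tmul_mul_t12, hg.lTensor_mulLeft]
  | add x y hx hy => rw [t13_add, t23_add, mul_add, add_mul, hx, hy]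

lemma tinv.t13_mul_t23 (hg : tinv k A g) (v : A ⊗[k] A) :
    t13 k A v * t23 k A g = t23 k A g * t12 k A v := by
  induction v using TensorProduct.induction_on with
  | zero => simp [t12, t13]
  | tmul a b => rw [t13_tmul_mul_t23, t23_mul_t12_tmul, hg.lTensor_mulLeft]
  | add x y hx hy => rw [t13_add, t12_add, mul_add, add_mul, hx, hy]

lemma tinv.t13_mul_t23_of_comm (hg : tinv k A g) (hsymm : TensorProduct.comm k A A g = g)
    (v : A ⊗[k] A) :
    t13 k A g * t23 k A v = t12 k A (TensorProduct.comm k A A v) * t13 k A g := by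
  induction v using TensorProduct.induction_on with
  | zero => simp [t12, t23]
  | tmul a b =>
    rw [t13_mul_t23_tmul, TensorProduct.comm_tmul, t12_tmul_mul_t13,
      hg.lTensor_mulRight_of_comm hsymm]
  | add x y hx hy => rw [t23_add, map_add, t12_add, mul_add, add_mul, hx, hy]

end Legs

section YangBaxterForm

variable {k : Type*} [CommRing k]

def ybeForm {R : Type*} [Ring R] [Algebra k R] (μ : k) (x y z : R) : R :=
  x * y + y * z - z * x - μ • y

lemma map_ybeForm {R S F : Type*} [Ring R] [Algebra k R] [Ring S] [Algebra k S] [FunLike F R S]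
    [AlgHomClass F k R S] (f : F) (μ : k) (x y z : R) : f (ybeForm μ x y z) = ybeForm μ (f x) (f y) (f z) := by
  simp [ybeForm]

lemma ybeForm_sub_add {R : Type*} [Ring R] [Algebra k R] (μ : k) (p q w g₁₂ g₁₃ g₂₃ : R)
    (h₁ : g₁₂ * q = w * g₁₂) (h₂ : q * g₂₃ = g₂₃ * p) (h₃ : g₁₃ * g₂₃ = g₂₃ * g₁₂)
    (h₄ : g₁₃ * w = (g₁₂ - p + μ • 1) * g₁₃) :
    ybeForm μ (g₁₂ - p + μ • 1) (g₁₃ - q + μ • 1) (g₂₃ - w + μ • 1) = ybeForm μ p q w := by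
  rw [← sub_eq_zero]
  calc _ = (w * g₁₂ - g₁₂ * q) + (g₂₃ * p - q * g₂₃) + (g₁₃ * g₂₃ - g₂₃ * g₁₂)
        + ((g₁₂ - p + μ • 1) * g₁₃ - g₁₃ * w) := by
        simp only [ybeForm, mul_add, add_mul, mul_sub, sub_mul, smul_mul_assoc, mul_smul_comm,
          one_mul, mul_one, smul_smul, smul_add, smul_sub]
        module
    _ = 0 := by rw [h₁, h₂, h₃, h₄]; simp

end YangBaxterForm

section Symmetrizer

variable {k A B : Type*} [Field k] [Ring A] [Algebra k A] [Ring B] [Algebra k B]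

lemma map_comm_eq_of_symmetrizer (f : A ⊗[k] A →ₗ[k] B) (hf : f ((1 : A) ⊗ₜ[k] (1 : A)) = 1)
    {r g : A ⊗[k] A} {μ : k}
    (hg : g = r + TensorProduct.comm k A A r - μ • ((1 : A) ⊗ₜ[k] (1 : A))) :
    f (TensorProduct.comm k A A r) = f g - f r + μ • 1 := by
  rw [hg, map_sub, map_add, map_smul, hf]
  abel

end Symmetrizer

noncomputable def flip13 (k A : Type*) [Field k] [Ring A] [Algebra k A] :
    A ⊗[k] (A ⊗[k] A) ≃ₐ[k] A ⊗[k] (A ⊗[k] A) :=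
  (Algebra.TensorProduct.congr AlgEquiv.refl (Algebra.TensorProduct.comm k A A)).trans <|
    (Algebra.TensorProduct.leftComm k A A A).trans <|
      Algebra.TensorProduct.congr AlgEquiv.refl (Algebra.TensorProduct.comm k A A)

section Flip

variable {k A : Type*} [Field k] [Ring A] [Algebra k A]

@[simp] lemma flip13_tmul (x y z : A) :
    flip13 k A (x ⊗ₜ[k] (y ⊗ₜ[k] z)) = z ⊗ₜ[k] (y ⊗ₜ[k] x) := by
  simp [flip13]

lemma flip13_t12 (u : A ⊗[k] A) :
    flip13 k A (t12 k A u) = t23 k A (TensorProduct.comm k A A u) := by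
  induction u using TensorProduct.induction_on with
  | zero => simp [t12, t23]
  | tmul a b => simp
  | add x y hx hy => simp_all

lemma flip13_t13 (u : A ⊗[k] A) :
    flip13 k A (t13 k A u) = t13 k A (TensorProduct.comm k A A u) := by
  induction u using TensorProduct.induction_on with
  | zero => simp [t13]
  | tmul a b => simp
  | add x y hx hy => simp_all

lemma flip13_t23 (u : A ⊗[k] A) :
    flip13 k A (t23 k A u) = t12 k A (TensorProduct.comm k A A u) := by
  induction u using TensorProduct.induction_on with
  | zero => simp [t12, t23]
  | tmul a b => simp
  | add x y hx hy => simp_all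

lemma flip13_ybeForm_comm (μ : k) (r : A ⊗[k] A) :
    flip13 k A (ybeForm μ (t12 k A (TensorProduct.comm k A A r))
      (t13 k A (TensorProduct.comm k A A r)) (t23 k A (TensorProduct.comm k A A r)))
      = ybeForm μ (t23 k A r) (t13 k A r) (t12 k A r) := by
  simp only [map_ybeForm, flip13_t12, flip13_t13, flip13_t23, TensorProduct.comm_comm]

end Flip

lemma ybeForm_comm_eq_of_tinv {k A : Type*} [Field k] [Ring A] [Algebra k A] {μ : k}
    {r : A ⊗[k] A}
    (hinv : tinv k A (r + TensorProduct.comm k A A r - μ • ((1 : A) ⊗ₜ[k] (1 : A)))) :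
    ybeForm μ (t12 k A (TensorProduct.comm k A A r)) (t13 k A (TensorProduct.comm k A A r))
      (t23 k A (TensorProduct.comm k A A r)) = ybeForm μ (t12 k A r) (t13 k A r) (t23 k A r) := by
  set g := r + TensorProduct.comm k A A r - μ • ((1 : A) ⊗ₜ[k] (1 : A)) with hg
  have hsymm : TensorProduct.comm k A A g = g := by
    rw [hg, map_sub, map_add, map_smul, TensorProduct.comm_tmul, TensorProduct.comm_comm,
      add_comm r]
  have e₁₂ : t12 k A (TensorProduct.comm k A A r) = t12 k A g - t12 k A r + μ • 1 :=
    map_comm_eq_of_symmetrizer _ rfl hg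
  have e₁₃ : t13 k A (TensorProduct.comm k A A r) = t13 k A g - t13 k A r + μ • 1 :=
    map_comm_eq_of_symmetrizer _ rfl hg
  have e₂₃ : t23 k A (TensorProduct.comm k A A r) = t23 k A g - t23 k A r + μ • 1 :=
    map_comm_eq_of_symmetrizer (TensorProduct.mk k A (A ⊗[k] A) 1) rfl hg
  rw [e₁₂, e₁₃, e₂₃]
  refine ybeForm_sub_add μ _ _ _ _ _ _ (hinv.t12_mul_t13 r) (hinv.t13_mul_t23 r)
    (hinv.t13_mul_t23 g) ?_
  rw [hinv.t13_mul_t23_of_comm hsymm, e₁₂]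

theorem stmt11_general (k A : Type*) [Field k] [Ring A] [Algebra k A]
    (μ : k) (r : A ⊗[k] A)
    (hinv : tinv k A
      (r + TensorProduct.comm k A A r - μ • ((1 : A) ⊗ₜ[k] (1 : A)))) :
    nhacYBE k A μ r ↔
      t13 k A r * t12 k A r + t23 k A r * t13 k A r - t12 k A r * t23 k A r
        = μ • t13 k A r := by
  calc nhacYBE k A μ r ↔ ybeForm μ (t12 k A r) (t13 k A r) (t23 k A r) = 0 := sub_eq_zero.symm
    _ ↔ flip13 k A (ybeForm μ (t12 k A (TensorProduct.comm k A A r))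
          (t13 k A (TensorProduct.comm k A A r)) (t23 k A (TensorProduct.comm k A A r))) = 0 := by
      rw [ybeForm_comm_eq_of_tinv hinv, map_eq_zero_iff _ (flip13 k A).injective]
    _ ↔ _ := by
      rw [flip13_ybeForm_comm, ybeForm, sub_eq_zero, add_comm (t23 k A r * t13 k A r)]

theorem stmt11 (k A : Type*) [Field k] [Ring A] [Algebra k A]
    [FiniteDimensional k A] (μ : k) (r : A ⊗[k] A)
    (hinv : tinv k A
      (r + TensorProduct.comm k A A r - μ • ((1 : A) ⊗ₜ[k] (1 : A)))) :
    nhacYBE k A μ r ↔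
      t13 k A r * t12 k A r + t23 k A r * t13 k A r - t12 k A r * t23 k A r
        = μ • t13 k A r :=
  stmt11_general k A μ r hinv
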